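/- arXiv:2307.03767 — 4 statements merged into one kernel-verified Lean document; each statement's English description precedes it below -/
import Mathlib

section
/- Let U be a split-filtered ring whose filtration is exhaustive, and let S, T ⊆ U be additive subgroups which are split-filtered subgroups: writing S_{≤n} := S ∩ U_{≤n} and S'_n := S ∩ U'_n (similarly for T), assume S = ⋃_n S_{≤n}, S_{≤n} = S'_n + S_{≤n−1}, T = ⋃_n T_{≤n}, and T_{≤n} = T'_n + T_{≤n−1} for all n. Let ST denote the additive subgroup of U generated by all products st with s ∈ S, t ∈ T. Then for every n: ST ∩ U_{≤n} = Σ_{p+q=n} S_{≤p}T_{≤q}, the subgroup (ST)'_n := Σ_{p+q=n} S'_pT'_q satisfies ST ∩ U_{≤n} = (ST)'_n + (ST ∩ U_{≤n−1}) and (ST)'_n ∩ (ST ∩ U_{≤n−1}) = 0; in particular ST, with the restricted filtration and the subgroups (ST)'_n, is split-filtered. -/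
/-
The subgroups `D n := Σ_{p+q=n} S_{≤p} T_{≤q}` form an increasing chain inside `U_{≤n}`
exhausting `ST`. Expanding `(s' + s)(t' + t)` with `s' ∈ S'_p`, `t' ∈ T'_q` and `s`, `t` one
step lower gives `D n = (ST)'_n + D (n-1)` with `(ST)'_n ⊆ U'_n`. Since `U'_n ∩ U_{≤n-1} = 0`,
an element of `D m` lying in `U_{≤n}` for `n < m` already lies in `D (m-1)`, and descending
step by step it lies in `D n`; hence `ST ∩ U_{≤n} = D n`, and the rest follows.
-/

/-- A split-filtered ring: a ring `R` with an increasing filtration `F n` satisfying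
`F p * F q ⊆ F (p+q)`, together with splitting subgroups `P n ≤ F n` with
`P p * P q ⊆ P (p+q)` such that each `F n` is the internal direct sum of `P n` and
`F (n-1)`. -/
structure SplitFilteredRing (R : Type) [Ring R] where
  F : ℤ → AddSubgroup R
  P : ℤ → AddSubgroup R
  mono : ∀ n : ℤ, F n ≤ F (n + 1)
  P_le_F : ∀ n : ℤ, P n ≤ F n
  sup_eq : ∀ n : ℤ, F n = P n ⊔ F (n - 1)
  inf_eq : ∀ n : ℤ, P n ⊓ F (n - 1) = ⊥
  mul_mem : ∀ (p q : ℤ) (x y : R), x ∈ F p → y ∈ F q → x * y ∈ F (p + q)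
  P_mul_mem : ∀ (p q : ℤ) (x y : R), x ∈ P p → y ∈ P q → x * y ∈ P (p + q)

/-- The additive subgroup generated by all products `a * b` with `a ∈ A`, `b ∈ B`. -/
def mulSub {R : Type} [Ring R] (A B : AddSubgroup R) : AddSubgroup R :=
  AddSubgroup.closure {x | ∃ a ∈ A, ∃ b ∈ B, x = a * b}

section mulSub

variable {R : Type} [Ring R] {A A' B B' C : AddSubgroup R}

lemma mulSub_le (h : ∀ a ∈ A, ∀ b ∈ B, a * b ∈ C) : mulSub A B ≤ C :=
  (AddSubgroup.closure_le C).2 fun _ ⟨a, ha, b, hb, hx⟩ => hx ▸ h a ha b hb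

lemma mul_mem_mulSub {a b : R} (ha : a ∈ A) (hb : b ∈ B) : a * b ∈ mulSub A B :=
  AddSubgroup.subset_closure ⟨a, ha, b, hb, rfl⟩

lemma mulSub_mono (hA : A ≤ A') (hB : B ≤ B') : mulSub A B ≤ mulSub A' B' :=
  mulSub_le fun _ ha _ hb => mul_mem_mulSub (hA ha) (hB hb)

end mulSub

namespace SplitFilteredRing

variable {R : Type} [Ring R] (U : SplitFilteredRing R)

lemma F_monotone : Monotone U.F :=
  monotone_int_of_le_succ U.mono

lemma inf_F_le_of_le_P_sup {n : ℤ} {G H : AddSubgroup R} (hG : G ≤ U.P n ⊔ H)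
    (hH : H ≤ U.F (n - 1)) : G ⊓ U.F (n - 1) ≤ H := by
  rintro x ⟨hxG, hxF⟩
  obtain ⟨a, haP, b, hbH, rfl⟩ := AddSubgroup.mem_sup.1 (hG hxG)
  have haF : a ∈ U.F (n - 1) := by
    simpa using (U.F (n - 1)).sub_mem hxF (hH hbH)
  have ha : a ∈ U.P n ⊓ U.F (n - 1) := ⟨haP, haF⟩
  rw [U.inf_eq n, AddSubgroup.mem_bot] at ha
  simpa [ha] using hbH

def IsSplitSubgroup (S : AddSubgroup R) : Prop :=
  ∀ n : ℤ, S ⊓ U.F n = (S ⊓ U.P n) ⊔ (S ⊓ U.F (n - 1))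

variable (S T : AddSubgroup R)

def prodFiltered (n : ℤ) : AddSubgroup R :=
  ⨆ p : ℤ, mulSub (S ⊓ U.F p) (T ⊓ U.F (n - p))

def prodSplit (n : ℤ) : AddSubgroup R :=
  ⨆ p : ℤ, mulSub (S ⊓ U.P p) (T ⊓ U.P (n - p))

variable {U S T}

lemma mul_mem_prodFiltered {p q n : ℤ} {a b : R} (ha : a ∈ S ⊓ U.F p) (hb : b ∈ T ⊓ U.F q)
    (hn : p + q = n) : a * b ∈ U.prodFiltered S T n :=
  AddSubgroup.mem_iSup_of_mem p <| mul_mem_mulSub ha (by rwa [← hn, add_sub_cancel_left])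

lemma mul_mem_prodSplit {p q n : ℤ} {a b : R} (ha : a ∈ S ⊓ U.P p) (hb : b ∈ T ⊓ U.P q)
    (hn : p + q = n) : a * b ∈ U.prodSplit S T n :=
  AddSubgroup.mem_iSup_of_mem p <| mul_mem_mulSub ha (by rwa [← hn, add_sub_cancel_left])

variable (U S T)

lemma prodFiltered_le_F (n : ℤ) : U.prodFiltered S T n ≤ U.F n :=
  iSup_le fun p => mulSub_le fun a ha b hb => by
    simpa using U.mul_mem p (n - p) a b ha.2 hb.2

lemma prodSplit_le_P (n : ℤ) : U.prodSplit S T n ≤ U.P n :=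
  iSup_le fun p => mulSub_le fun a ha b hb => by
    simpa using U.P_mul_mem p (n - p) a b ha.2 hb.2

lemma prodFiltered_le_mulSub (n : ℤ) : U.prodFiltered S T n ≤ mulSub S T :=
  iSup_le fun _ => mulSub_mono inf_le_left inf_le_left

lemma prodSplit_le_prodFiltered (n : ℤ) : U.prodSplit S T n ≤ U.prodFiltered S T n :=
  iSup_mono fun p => mulSub_mono (inf_le_inf_left S (U.P_le_F p))
    (inf_le_inf_left T (U.P_le_F _))

lemma prodFiltered_monotone : Monotone (U.prodFiltered S T) := fun _ _ h =>
  iSup_mono fun _ => mulSub_mono le_rfl (inf_le_inf_left T (U.F_monotone (by omega)))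

lemma mulSub_le_iSup_prodFiltered (hexh : ∀ x : R, ∃ n : ℤ, x ∈ U.F n) :
    mulSub S T ≤ ⨆ n : ℤ, U.prodFiltered S T n :=
  mulSub_le fun a ha b hb => by
    obtain ⟨p, hp⟩ := hexh a
    obtain ⟨q, hq⟩ := hexh b
    exact AddSubgroup.mem_iSup_of_mem (p + q) (mul_mem_prodFiltered ⟨ha, hp⟩ ⟨hb, hq⟩ rfl)

lemma prodFiltered_eq_prodSplit_sup
    (hS : U.IsSplitSubgroup S) (hT : U.IsSplitSubgroup T) (n : ℤ) :
    U.prodFiltered S T n = U.prodSplit S T n ⊔ U.prodFiltered S T (n - 1) := by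
  refine le_antisymm (iSup_le fun p => mulSub_le fun a ha b hb => ?_)
    (sup_le (prodSplit_le_prodFiltered U S T n) (prodFiltered_monotone U S T (by omega)))
  obtain ⟨a', ha', a₀, ha₀, rfl⟩ := AddSubgroup.mem_sup.1 ((hS p).le ha)
  obtain ⟨b', hb', b₀, hb₀, rfl⟩ := AddSubgroup.mem_sup.1 ((hT (n - p)).le hb)
  -- `a'b₀` and `a₀(b' + b₀)` both have filtration degree `n - 1`
  rw [add_mul, mul_add, add_assoc]
  refine add_mem (AddSubgroup.mem_sup_left (mul_mem_prodSplit ha' hb' (by omega)))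
    (AddSubgroup.mem_sup_right (add_mem ?_ ?_))
  · exact mul_mem_prodFiltered ⟨ha'.1, U.P_le_F p ha'.2⟩ hb₀ (by omega)
  · exact mul_mem_prodFiltered ha₀ hb (by omega)

lemma prodFiltered_inf_F_le
    (hS : U.IsSplitSubgroup S) (hT : U.IsSplitSubgroup T) {n m : ℤ} (h : n ≤ m) :
    U.prodFiltered S T m ⊓ U.F n ≤ U.prodFiltered S T n := by
  induction m, h using Int.leInduction with
  | base => exact inf_le_left
  | succ m hnm ih =>
    have hstep : U.prodFiltered S T (m + 1) ⊓ U.F m ≤ U.prodFiltered S T m := by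
      simpa using U.inf_F_le_of_le_P_sup
        ((prodFiltered_eq_prodSplit_sup U S T hS hT (m + 1)).le.trans
          (sup_le_sup_right (prodSplit_le_P U S T _) _))
        (by simpa using prodFiltered_le_F U S T m)
    exact fun x ⟨hxD, hxF⟩ => ih ⟨hstep ⟨hxD, U.F_monotone hnm hxF⟩, hxF⟩

lemma mulSub_inf_F_eq_prodFiltered (hexh : ∀ x : R, ∃ n : ℤ, x ∈ U.F n)
    (hS : U.IsSplitSubgroup S) (hT : U.IsSplitSubgroup T) (n : ℤ) :
    mulSub S T ⊓ U.F n = U.prodFiltered S T n := by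
  refine le_antisymm (fun x ⟨hxST, hxF⟩ => ?_)
    (le_inf (prodFiltered_le_mulSub U S T n) (prodFiltered_le_F U S T n))
  obtain ⟨m, hm⟩ := (AddSubgroup.mem_iSup_of_directed
    (prodFiltered_monotone U S T).directed_le).1 (mulSub_le_iSup_prodFiltered U S T hexh hxST)
  exact prodFiltered_inf_F_le U S T hS hT (le_max_right m n)
    ⟨prodFiltered_monotone U S T (le_max_left m n) hm, hxF⟩

end SplitFilteredRing

open SplitFilteredRing in
/-- for split-filtered additive subgroups `S`, `T` of a split-filtered
ring `U` with exhaustive filtration, the product subgroup `ST` is split-filtered: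
`ST ∩ U_{≤n} = Σ_{p+q=n} S_{≤p}T_{≤q}`, and with `(ST)'_n := Σ_{p+q=n} S'_p T'_q`,
`ST ∩ U_{≤n}` is the internal direct sum of `(ST)'_n` and `ST ∩ U_{≤n-1}`. -/
theorem product_subgroup_split_filtered {R : Type} [Ring R] (U : SplitFilteredRing R)
    (hexh : ∀ x : R, ∃ n : ℤ, x ∈ U.F n)
    (S T : AddSubgroup R)
    (hS_split : ∀ n : ℤ, S ⊓ U.F n = (S ⊓ U.P n) ⊔ (S ⊓ U.F (n - 1)))
    (hT_split : ∀ n : ℤ, T ⊓ U.F n = (T ⊓ U.P n) ⊔ (T ⊓ U.F (n - 1))) :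
    ∀ n : ℤ,
      mulSub S T ⊓ U.F n = (⨆ p : ℤ, mulSub (S ⊓ U.F p) (T ⊓ U.F (n - p))) ∧
      (⨆ p : ℤ, mulSub (S ⊓ U.P p) (T ⊓ U.P (n - p))) ≤ mulSub S T ⊓ U.F n ∧
      mulSub S T ⊓ U.F n =
        (⨆ p : ℤ, mulSub (S ⊓ U.P p) (T ⊓ U.P (n - p))) ⊔ (mulSub S T ⊓ U.F (n - 1)) ∧
      (⨆ p : ℤ, mulSub (S ⊓ U.P p) (T ⊓ U.P (n - p))) ⊓ (mulSub S T ⊓ U.F (n - 1)) = ⊥ := by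
  intro n
  have hfilt := mulSub_inf_F_eq_prodFiltered U S T hexh hS_split hT_split
  refine ⟨hfilt n, ?_, ?_, ?_⟩
  · exact (prodSplit_le_prodFiltered U S T n).trans (hfilt n).ge
  · rw [hfilt, hfilt]
    exact prodFiltered_eq_prodSplit_sup U S T hS_split hT_split n
  · rw [eq_bot_iff, ← U.inf_eq n]
    exact inf_le_inf (prodSplit_le_P U S T n) inf_le_right
end

section
/- Let R be a commutative ring and L a Lie algebra over R with an exhaustive filtration by R-submodules L_{≤n} (n ∈ ℤ) satisfying [L_{≤p}, L_{≤q}] ⊆ L_{≤p+q}, together with R-submodules L'_n ⊆ L_{≤n} such that for every n, L_{≤n} is the internal direct sum of L'_n and L_{≤n−1}, and [L'_p, L'_q] ⊆ L'_{p+q}; thus L' := ⊕_n L'_n is a ℤ-graded Lie subalgebra of L and its universal enveloping algebra U(L') is a ℤ-graded associative R-algebra. Filter U(L) by letting U(L)_{≤n} be the R-submodule spanned by 1 (when n ≥ 0) together with all products ι(x_1)⋯ι(x_k) with x_i ∈ L_{≤n_i} and n_1 + ⋯ + n_k ≤ n, where ι : L → U(L) is the canonical map. Then U(L) is a split-filtered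 algebra with respect to U(L'): for every n, the canonical algebra map U(L') → U(L) is injective on the homogeneous component U(L')_n, and U(L)_{≤n} is the internal direct sum of the image of U(L')_n and U(L)_{≤n−1}. -/
/-- A split filtration on a Lie algebra `L` over `R`: an exhaustive increasing
filtration by submodules `F n` with `⁅F p, F q⁆ ⊆ F (p+q)`, together with splitting
submodules `P n ≤ F n` with `⁅P p, P q⁆ ⊆ P (p+q)`, such that each `F n` is the
internal direct sum of `P n` and `F (n-1)`. -/
structure LieSplitFiltration (R L : Type) [CommRing R] [LieRing L] [LieAlgebra R L] where
  F : ℤ → Submodule R L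
  P : ℤ → Submodule R L
  mono : ∀ n : ℤ, F n ≤ F (n + 1)
  exh : ∀ x : L, ∃ n : ℤ, x ∈ F n
  P_le_F : ∀ n : ℤ, P n ≤ F n
  sup_eq : ∀ n : ℤ, F n = P n ⊔ F (n - 1)
  inf_eq : ∀ n : ℤ, P n ⊓ F (n - 1) = ⊥
  lie_F : ∀ (p q : ℤ) (x y : L), x ∈ F p → y ∈ F q → ⁅x, y⁆ ∈ F (p + q)
  lie_P : ∀ (p q : ℤ) (x y : L), x ∈ P p → y ∈ P q → ⁅x, y⁆ ∈ P (p + q)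

variable {R L : Type} [CommRing R] [LieRing L] [LieAlgebra R L]

/-- The graded Lie subalgebra `L' = ⊕ₙ L'ₙ` of a split-filtered Lie algebra. -/
def gradedPart (S : LieSplitFiltration R L) : LieSubalgebra R L :=
  { (⨆ n : ℤ, S.P n : Submodule R L) with
    lie_mem' := by
      intro x y hx hy
      have hx' : x ∈ (⨆ n : ℤ, S.P n : Submodule R L) := hx
      have hy' : y ∈ (⨆ n : ℤ, S.P n : Submodule R L) := hy
      show ⁅x, y⁆ ∈ (⨆ n : ℤ, S.P n : Submodule R L)
      refine Submodule.iSup_induction (motive := fun z => ⁅x, z⁆ ∈ (⨆ n : ℤ, S.P n : Submodule R L))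
        _ hy' (fun q z hz => ?_) (by simp) (fun z w hz hw => ?_)
      · refine Submodule.iSup_induction (motive := fun v => ⁅v, z⁆ ∈ (⨆ n : ℤ, S.P n : Submodule R L))
          _ hx' (fun p v hv => ?_) (by simp) (fun v w hv hw => ?_)
        · exact Submodule.mem_iSup_of_mem (p + q) (S.lie_P p q v z hv hz)
        · simpa [add_lie] using add_mem hv hw
      · simpa [lie_add] using add_mem hz hw }

open UniversalEnvelopingAlgebra in
/-- The filtration `U(L)_{≤n}` of the universal enveloping algebra: the `R`-span of `1`
(for `n ≥ 0`) together with all products `ι(x₁)⋯ι(x_k)` with `xᵢ ∈ L_{≤nᵢ}` and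
`n₁ + ⋯ + n_k ≤ n` (the empty product accounts for `1`). -/
def UEAle (S : LieSplitFiltration R L) (n : ℤ) :
    Submodule R (UniversalEnvelopingAlgebra R L) :=
  Submodule.span R
    {x | ∃ l : List (ℤ × L), (∀ p ∈ l, p.2 ∈ S.F p.1) ∧ (l.map Prod.fst).sum ≤ n ∧
      x = (l.map fun p => ι R p.2).prod}

open UniversalEnvelopingAlgebra in
/-- The degree-`n` homogeneous component of the universal enveloping algebra
`U(L')` of the graded Lie subalgebra `L'`: the `R`-span of products
`ι(x₁)⋯ι(x_k)` with `xᵢ ∈ L'_{nᵢ}` homogeneous and `n₁ + ⋯ + n_k = n`. -/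
def UEAgrade (S : LieSplitFiltration R L) (n : ℤ) :
    Submodule R (UniversalEnvelopingAlgebra R ↥(gradedPart S)) :=
  Submodule.span R
    {x | ∃ l : List (ℤ × ↥(gradedPart S)), (∀ p ∈ l, (p.2 : L) ∈ S.P p.1) ∧
      (l.map Prod.fst).sum = n ∧ x = (l.map fun p => ι R p.2).prod}

attribute [local instance] LieRing.ofAssociativeRing

/-- The canonical algebra map `U(L') → U(L)` induced by the inclusion `L' ⊆ L`. -/
noncomputable def canMap (S : LieSplitFiltration R L) :
    UniversalEnvelopingAlgebra R ↥(gradedPart S) →ₐ[R] UniversalEnvelopingAlgebra R L :=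
  UniversalEnvelopingAlgebra.lift R
    ((UniversalEnvelopingAlgebra.ι R).comp (gradedPart S).incl)

/-!
Every `x : L` has homogeneous components `xₙ ∈ L'ₙ`, the projections along
`F (n-1) ⊕ ⨁_{p>n} L'ₚ`, which vanish for large `n` but possibly not for small `n`. Hence
`ψ x := ∑ₙ ι(xₙ)` is a Hahn series over `ℤᵒᵈ` with coefficients in `U(L')`, i.e. an element of
the completion of `U(L')` for the descending degree. The degree-`m` coefficients of `ψ ⁅x, y⁆`
and `⁅ψ x, ψ y⁆` only see finitely many components of `x` and `y`, and on homogeneous elements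
the two agree because `L'` is graded; so `ψ` is a Lie map and extends to an algebra map
`φ : U(L) → U(L')⟦ℤᵒᵈ⟧`. Now `φ` sends the image of `U(L')ₙ` to monomials of degree `n` and
`U(L)_{≤n-1}` to series of degree `< n`, which gives injectivity and the trivial intersection.
The sum decomposition comes from splitting every factor `x ∈ F k` as `x' + x''` with
`x' ∈ L'ₖ`, `x'' ∈ F (k-1)` and expanding the product.
-/

open OrderDual

namespace HahnSeries

variable (R) (A : Type*) [Semiring A] [Module R A]

/-- Series whose exponents, read in `ℤ`, are all `≤ k`. -/
def degreeLE (k : ℤ) : Submodule R (HahnSeries ℤᵒᵈ A) where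
  carrier := {f | ((toDual k : ℤᵒᵈ) : WithTop ℤᵒᵈ) ≤ f.orderTop}
  zero_mem' := by simp
  add_mem' {f g} hf hg := (le_min hf hg).trans (min_orderTop_le_orderTop_add (x := f) (y := g))
  smul_mem' r f hf := hf.trans (orderTop_le_orderTop_smul r f)

variable {R A}

theorem mem_degreeLE {k : ℤ} {f : HahnSeries ℤᵒᵈ A} :
    f ∈ degreeLE R A k ↔ ∀ m : ℤ, k < m → f.coeff (toDual m) = 0 :=
  le_orderTop_iff_forall.trans ⟨fun h _ hm => h _ (WithTop.coe_lt_coe.2 (toDual_lt_toDual.2 hm)),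
    fun h _ hj => h _ (toDual_lt_toDual.1 (WithTop.coe_lt_coe.1 hj))⟩

theorem degreeLE_mono : Monotone (degreeLE R A) := fun _ _ h _ hf =>
  mem_degreeLE.2 fun m hm => mem_degreeLE.1 hf m (h.trans_lt hm)

instance : SetLike.GradedMonoid (degreeLE R A) where
  one_mem := mem_degreeLE.2 fun m hm => by simp [coeff_one, show toDual m ≠ 0 from hm.ne']
  mul_mem a b f g hf hg := (add_le_add hf hg).trans (orderTop_add_le_mul (x := f) (y := g))

theorem lie_mem_degreeLE {A : Type*} [Ring A] [Module R A] {a b : ℤ} {f g : HahnSeries ℤᵒᵈ A}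
    (hf : f ∈ degreeLE R A a) (hg : g ∈ degreeLE R A b) : ⁅f, g⁆ ∈ degreeLE R A (a + b) := by
  rw [Ring.lie_def]
  exact sub_mem (SetLike.mul_mem_graded hf hg) (add_comm a b ▸ SetLike.mul_mem_graded hg hf)

end HahnSeries

instance gradedMonoid_comap {ι A B : Type*} [AddMonoid ι] [Semiring A] [Semiring B] [Algebra R A]
    [Algebra R B] (f : A →ₐ[R] B) (M : ι → Submodule R B) [SetLike.GradedMonoid M] :
    SetLike.GradedMonoid fun i => (M i).comap f.toLinearMap where
  one_mem := show f 1 ∈ M 0 by rw [map_one]; exact SetLike.one_mem_graded M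
  mul_mem i j a b (ha : f a ∈ M i) (hb : f b ∈ M j) :=
    show f (a * b) ∈ M (i + j) by rw [map_mul]; exact SetLike.mul_mem_graded ha hb

namespace LieSplitFiltration

open UniversalEnvelopingAlgebra HahnSeries Submodule

variable (S : LieSplitFiltration R L)

theorem F_monotone : Monotone S.F := monotone_int_of_le_succ S.mono

theorem F_le_iSup_P_sup_F (a N : ℤ) : S.F N ≤ (⨆ p ∈ Set.Ioc a N, S.P p) ⊔ S.F a := by
  rcases le_total N a with hN | hN
  · exact le_sup_of_le_right (S.F_monotone hN)
  induction N, hN using Int.leInduction with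
  | base => exact le_sup_right
  | succ N hN ih =>
    rw [S.sup_eq (N + 1), add_sub_cancel_right]
    refine sup_le (le_sup_of_le_left (le_biSup S.P ⟨by omega, le_rfl⟩)) (ih.trans ?_)
    exact sup_le_sup_right (biSup_mono fun p hp => ⟨hp.1, hp.2.trans (by omega)⟩) _

theorem iSup_P_Ioc_le_F (a N : ℤ) : ⨆ p ∈ Set.Ioc a N, S.P p ≤ S.F N :=
  iSup₂_le fun p hp => (S.P_le_F p).trans (S.F_monotone hp.2)

theorem disjoint_F_iSup_P_Ioc (n M : ℤ) : Disjoint (S.F n) (⨆ p ∈ Set.Ioc n M, S.P p) := by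
  rcases le_total M n with hM | hM
  · simp [Set.Ioc_eq_empty_of_le hM]
  induction M, hM using Int.leInduction with
  | base => simp
  | succ M hM ih =>
    have hsplit : ⨆ p ∈ Set.Ioc n (M + 1), S.P p ≤ (⨆ p ∈ Set.Ioc n M, S.P p) ⊔ S.P (M + 1) := by
      refine iSup₂_le fun p hp => ?_
      rcases eq_or_lt_of_le hp.2 with rfl | hlt
      · exact le_sup_right
      · exact le_sup_of_le_left (le_biSup S.P ⟨hp.1, by omega⟩)
    refine Disjoint.mono_right hsplit (ih.disjoint_sup_right_of_disjoint_sup_left ?_)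
    have := S.inf_eq (M + 1)
    rw [add_sub_cancel_right] at this
    exact (disjoint_iff.2 this).symm.mono_left (sup_le (S.F_monotone hM) (S.iSup_P_Ioc_le_F n M))

/-- `F (n-1) ⊕ ⨁_{p>n} P p`, with the sum over `p > n` written as a directed union of finite
ranges, so that its disjointness from `F n` reduces to `disjoint_F_iSup_P_Ioc`. -/
def complP (n : ℤ) : Submodule R L := S.F (n - 1) ⊔ ⨆ M, ⨆ p ∈ Set.Ioc n M, S.P p

theorem isCompl_P_complP (n : ℤ) : IsCompl (S.P n) (S.complP n) := by
  constructor
  · refine (disjoint_iff.2 (S.inf_eq n)).disjoint_sup_right_of_disjoint_sup_left ?_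
    rw [← S.sup_eq n, Monotone.directed_le ?_ |>.disjoint_iSup_right]
    · exact S.disjoint_F_iSup_P_Ioc n
    · exact fun M M' h => biSup_mono fun p hp => ⟨hp.1, hp.2.trans h⟩
  · rw [codisjoint_iff_le_sup]
    intro x _
    obtain ⟨N, hx⟩ := S.exh x
    refine (S.F_le_iSup_P_sup_F n N).trans (sup_le ?_ ?_) hx
    · exact le_sup_of_le_right <|
        le_sup_of_le_right (le_iSup (fun M => ⨆ p ∈ Set.Ioc n M, S.P p) N)
    · rw [S.sup_eq n]
      exact sup_le_sup_left le_sup_left _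

theorem P_le_gradedPart (n : ℤ) : S.P n ≤ (gradedPart S).toSubmodule :=
  le_iSup S.P n

noncomputable def component (n : ℤ) : L →ₗ[R] gradedPart S :=
  (Submodule.inclusion (S.P_le_gradedPart n)).comp
    ((S.P n).projectionOnto _ (S.isCompl_P_complP n))

theorem component_of_mem_P {n : ℤ} {x : L} (hx : x ∈ S.P n) : (S.component n x : L) = x := by
  simp [component, Submodule.projectionOnto_apply_of_mem_left _ hx]

theorem component_of_mem_complP {n : ℤ} {x : L} (hx : x ∈ S.complP n) : S.component n x = 0 := by
  simp [component, Submodule.projectionOnto_apply_of_mem_right _ hx]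

theorem component_of_mem_P_of_ne {n k : ℤ} {x : L} (hx : x ∈ S.P k) (h : k ≠ n) :
    S.component n x = 0 := by
  refine S.component_of_mem_complP ?_
  rcases h.lt_or_gt with hlt | hgt
  · exact mem_sup_left (S.F_monotone (by omega : k ≤ n - 1) (S.P_le_F k hx))
  · refine mem_sup_right (le_iSup (fun M => ⨆ p ∈ Set.Ioc n M, S.P p) k ?_)
    exact le_biSup S.P (show k ∈ Set.Ioc n k from ⟨hgt, le_rfl⟩) hx

theorem component_of_mem_F {n N : ℤ} {x : L} (hx : x ∈ S.F N) (h : N < n) :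
    S.component n x = 0 :=
  S.component_of_mem_complP (mem_sup_left (S.F_monotone (by omega : N ≤ n - 1) hx))

noncomputable def psi : L →ₗ[R] HahnSeries ℤᵒᵈ (UniversalEnvelopingAlgebra R (gradedPart S)) where
  toFun x := ofSuppBddBelow (fun i => ι R (S.component (ofDual i) x)) <| by
    obtain ⟨N, hx⟩ := S.exh x
    refine ⟨toDual N, fun i hi => ?_⟩
    by_contra h
    exact hi (by simp [S.component_of_mem_F hx (show N < ofDual i from not_le.1 h)])
  map_add' x y := by ext; simp
  map_smul' r x := by ext; simp

theorem coeff_psi (x : L) (n : ℤ) : (S.psi x).coeff (toDual n) = ι R (S.component n x) := rfl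

theorem psi_mem_degreeLE {N : ℤ} {x : L} (hx : x ∈ S.F N) : S.psi x ∈ degreeLE R _ N :=
  mem_degreeLE.2 fun m hm => by rw [coeff_psi, S.component_of_mem_F hx hm, map_zero]

theorem psi_of_mem_P {k : ℤ} {x : L} (hx : x ∈ S.P k) :
    S.psi x = single (toDual k) (ι R ⟨x, S.P_le_gradedPart k hx⟩) := by
  ext i
  rw [coeff_single]
  split_ifs with h
  · subst h
    exact congrArg (ι R) (Subtype.ext (S.component_of_mem_P hx))
  · exact (congrArg (ι R) (S.component_of_mem_P_of_ne hx (Ne.symm h))).trans (map_zero _)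

noncomputable def lieDefect :
    L →ₗ[R] L →ₗ[R] HahnSeries ℤᵒᵈ (UniversalEnvelopingAlgebra R (gradedPart S)) :=
  LinearMap.mk₂ R (fun x y => S.psi ⁅x, y⁆ - ⁅S.psi x, S.psi y⁆)
    (fun x x' y => by simp only [add_lie, map_add]; abel)
    (fun r x y => by simp only [smul_lie, map_smul, smul_sub])
    (fun x y y' => by simp only [lie_add, map_add]; abel)
    (fun r x y => by
      simp only [lie_smul, map_smul, Ring.lie_def, mul_smul_comm, smul_mul_assoc, smul_sub])

theorem map₂_lieDefect_F_le (a b : ℤ) :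
    map₂ S.lieDefect (S.F a) (S.F b) ≤ degreeLE R _ (a + b) :=
  map₂_le.2 fun x hx y hy => sub_mem (S.psi_mem_degreeLE (S.lie_F a b x y hx hy))
    (lie_mem_degreeLE (S.psi_mem_degreeLE hx) (S.psi_mem_degreeLE hy))

theorem lieDefect_of_mem_P {p q : ℤ} {x y : L} (hx : x ∈ S.P p) (hy : y ∈ S.P q) :
    S.lieDefect x y = 0 := by
  have hxy := S.lie_P p q x y hx hy
  simp only [lieDefect, LinearMap.mk₂_apply, S.psi_of_mem_P hx, S.psi_of_mem_P hy,
    S.psi_of_mem_P hxy, Ring.lie_def, single_mul_single, sub_eq_zero]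
  rw [add_comm (toDual q), ← single_sub, ← Ring.lie_def, ← LieHom.map_lie]
  rfl

theorem lieDefect_mem_degreeLE (x y : L) (m : ℤ) : S.lieDefect x y ∈ degreeLE R _ (m - 1) := by
  obtain ⟨Nx, hx⟩ := S.exh x
  obtain ⟨Ny, hy⟩ := S.exh y
  -- Below degree `m - Ny` (resp. `m - Nx`) the components of `x` (resp. `y`) cannot reach degree
  -- `m`; the finitely many remaining ones are homogeneous.
  set X := ⨆ p ∈ Set.Ioc (m - Ny - 1) Nx, S.P p
  set Y := ⨆ q ∈ Set.Ioc (m - Nx - 1) Ny, S.P q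
  have hXY : map₂ S.lieDefect X Y = ⊥ := by
    simp only [X, Y, map₂_iSup_left, map₂_iSup_right, iSup_eq_bot]
    exact fun _ _ _ _ => eq_bot_iff.2 (map₂_le.2 fun x hx y hy => S.lieDefect_of_mem_P hx hy)
  have hle : map₂ S.lieDefect (S.F Nx) (S.F Ny) ≤ degreeLE R _ (m - 1) := calc
    map₂ S.lieDefect (S.F Nx) (S.F Ny)
      ≤ map₂ S.lieDefect X (S.F Ny) ⊔ map₂ S.lieDefect (S.F (m - Ny - 1)) (S.F Ny) := by
        rw [← map₂_sup_left]
        exact map₂_le_map₂_left (S.F_le_iSup_P_sup_F _ _)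
    _ ≤ map₂ S.lieDefect (S.F Nx) (S.F (m - Nx - 1)) ⊔
          map₂ S.lieDefect (S.F (m - Ny - 1)) (S.F Ny) := by
        refine sup_le_sup_right ?_ _
        calc map₂ S.lieDefect X (S.F Ny)
            ≤ map₂ S.lieDefect X (Y ⊔ S.F (m - Nx - 1)) :=
              map₂_le_map₂_right (S.F_le_iSup_P_sup_F _ _)
          _ ≤ map₂ S.lieDefect (S.F Nx) (S.F (m - Nx - 1)) := by
              rw [map₂_sup_right, hXY, bot_sup_eq]
              exact map₂_le_map₂_left (S.iSup_P_Ioc_le_F _ _)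
    _ ≤ degreeLE R _ (m - 1) :=
        sup_le ((S.map₂_lieDefect_F_le _ _).trans (degreeLE_mono (by omega)))
          ((S.map₂_lieDefect_F_le _ _).trans (degreeLE_mono (by omega)))
  exact hle (apply_mem_map₂ _ hx hy)

theorem psi_lie (x y : L) : S.psi ⁅x, y⁆ = ⁅S.psi x, S.psi y⁆ :=
  sub_eq_zero.1 <| HahnSeries.ext <| funext fun i =>
    mem_degreeLE.1 (S.lieDefect_mem_degreeLE x y (ofDual i)) (ofDual i) (by omega)

noncomputable def psiHom :
    L →ₗ⁅R⁆ HahnSeries ℤᵒᵈ (UniversalEnvelopingAlgebra R (gradedPart S)) :=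
  { S.psi with map_lie' := S.psi_lie _ _ }

noncomputable def phi :
    UniversalEnvelopingAlgebra R L →ₐ[R]
      HahnSeries ℤᵒᵈ (UniversalEnvelopingAlgebra R (gradedPart S)) :=
  lift R S.psiHom

theorem phi_ι (x : L) : S.phi (ι R x) = S.psi x :=
  lift_ι_apply R S.psiHom x

theorem canMap_ι (z : gradedPart S) : canMap S (ι R z) = ι R (z : L) :=
  lift_ι_apply R _ z

theorem ι_mem_UEAle {k : ℤ} {x : L} (hx : x ∈ S.F k) : ι R x ∈ UEAle S k :=
  subset_span ⟨[(k, x)], by simpa using hx, by simp, by simp⟩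

theorem UEAle_mono : Monotone (UEAle S) := fun _ _ h =>
  span_mono fun _ ⟨l, hl, hsum, hx⟩ => ⟨l, hl, hsum.trans h, hx⟩

instance : SetLike.GradedMonoid (UEAle S) where
  one_mem := subset_span ⟨[], by simp, by simp, by simp⟩
  mul_mem a b u v hu hv := by
    have huv := mul_mem_mul hu hv
    rw [UEAle, UEAle, span_mul_span] at huv
    refine span_mono ?_ huv
    rintro _ ⟨_, ⟨l, hl, hsum, rfl⟩, _, ⟨l', hl', hsum', rfl⟩, rfl⟩
    refine ⟨l ++ l', fun p hp => (List.mem_append.1 hp).elim (hl p) (hl' p), ?_, by simp⟩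
    simp only [List.map_append, List.sum_append]
    omega

instance : SetLike.GradedMonoid (UEAgrade S) where
  one_mem := subset_span ⟨[], by simp, by simp, by simp⟩
  mul_mem a b u v hu hv := by
    have huv := mul_mem_mul hu hv
    rw [UEAgrade, UEAgrade, span_mul_span] at huv
    refine span_mono ?_ huv
    rintro _ ⟨_, ⟨l, hl, rfl, rfl⟩, _, ⟨l', hl', rfl, rfl⟩, rfl⟩
    exact ⟨l ++ l', fun p hp => (List.mem_append.1 hp).elim (hl p) (hl' p), by simp, by simp⟩

theorem UEAle_le {A : ℤ → Submodule R (UniversalEnvelopingAlgebra R L)} [SetLike.GradedMonoid A]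
    (hA : Monotone A) (hι : ∀ k, ∀ x ∈ S.F k, ι R x ∈ A k) (n : ℤ) : UEAle S n ≤ A n :=
  span_le.2 <| by
    rintro _ ⟨l, hl, hsum, rfl⟩
    exact hA hsum (SetLike.list_prod_map_mem_graded l Prod.fst _ fun p hp => hι _ _ (hl p hp))

theorem UEAgrade_le {A : ℤ → Submodule R (UniversalEnvelopingAlgebra R (gradedPart S))}
    [SetLike.GradedMonoid A] (hι : ∀ k (z : gradedPart S), (z : L) ∈ S.P k → ι R z ∈ A k)
    (n : ℤ) : UEAgrade S n ≤ A n :=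
  span_le.2 <| by
    rintro _ ⟨l, hl, rfl, rfl⟩
    exact SetLike.list_prod_map_mem_graded l Prod.fst _ fun p hp => hι _ _ (hl p hp)

theorem UEAle_le_comap_phi (n : ℤ) : UEAle S n ≤ (degreeLE R _ n).comap S.phi.toLinearMap :=
  S.UEAle_le (fun _ _ h => comap_mono (degreeLE_mono h))
    (fun _ x hx => show S.phi (ι R x) ∈ _ by rw [phi_ι]; exact S.psi_mem_degreeLE hx) n

theorem map_UEAgrade_le_UEAle (n : ℤ) : (UEAgrade S n).map (canMap S).toLinearMap ≤ UEAle S n :=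
  map_le_iff_le_comap.2 <|
    S.UEAgrade_le (A := fun n => (UEAle S n).comap (canMap S).toLinearMap) (fun k z hz =>
      show canMap S (ι R z) ∈ _ by rw [canMap_ι]; exact S.ι_mem_UEAle (S.P_le_F k hz)) n

theorem phi_canMap {n : ℤ} {u : UniversalEnvelopingAlgebra R (gradedPart S)}
    (hu : u ∈ UEAgrade S n) : S.phi (canMap S u) = single (toDual n) u := by
  let A n := LinearMap.eqLocus (S.phi.comp (canMap S)).toLinearMap
    (single.linearMap (R := R) (toDual n))
  have : SetLike.GradedMonoid A :=
    { one_mem := show S.phi (canMap S 1) = single 0 1 by rw [map_one, map_one, single_zero_one]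
      mul_mem a b u v (hu : S.phi (canMap S u) = _) (hv : S.phi (canMap S v) = _) :=
        show S.phi (canMap S (u * v)) = single (toDual (a + b)) (u * v) by
          rw [map_mul, map_mul, hu, hv]
          exact single_mul_single }
  refine S.UEAgrade_le (A := A) (fun k z hz => ?_) n hu
  show S.phi (canMap S (ι R z)) = single (toDual k) (ι R z)
  rw [canMap_ι, phi_ι, S.psi_of_mem_P hz]

noncomputable def gradeImageSupUEAle (n : ℤ) : Submodule R (UniversalEnvelopingAlgebra R L) :=
  (UEAgrade S n).map (canMap S).toLinearMap ⊔ UEAle S (n - 1)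

theorem gradeImageSupUEAle_monotone : Monotone S.gradeImageSupUEAle :=
  monotone_int_of_le_succ fun n => le_sup_of_le_right <| by
    rw [add_sub_cancel_right]
    exact sup_le (S.map_UEAgrade_le_UEAle n) (S.UEAle_mono (by omega))

instance : SetLike.GradedMonoid S.gradeImageSupUEAle where
  one_mem := mem_sup_left ⟨1, SetLike.one_mem_graded _, map_one (canMap S)⟩
  mul_mem a b u v hu hv := by
    obtain ⟨_, ⟨u₁, hu₁, rfl⟩, u₂, hu₂, rfl⟩ := mem_sup.1 hu
    obtain ⟨_, ⟨v₁, hv₁, rfl⟩, v₂, hv₂, rfl⟩ := mem_sup.1 hv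
    have hu₁' := S.map_UEAgrade_le_UEAle a ⟨u₁, hu₁, rfl⟩
    have hv₁' := S.map_UEAgrade_le_UEAle b ⟨v₁, hv₁, rfl⟩
    rw [add_mul, mul_add, mul_add, add_assoc]
    refine add_mem
      (mem_sup_left ⟨u₁ * v₁, SetLike.mul_mem_graded hu₁ hv₁, map_mul (canMap S) u₁ v₁⟩)
      (mem_sup_right (add_mem ?_ (add_mem ?_ ?_)))
    · simpa [add_sub_assoc] using SetLike.mul_mem_graded hu₁' hv₂
    · simpa [sub_add_eq_add_sub] using SetLike.mul_mem_graded hu₂ hv₁'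
    · exact S.UEAle_mono (by omega) (SetLike.mul_mem_graded hu₂ hv₂)

theorem ι_mem_gradeImageSupUEAle {k : ℤ} {x : L} (hx : x ∈ S.F k) :
    ι R x ∈ S.gradeImageSupUEAle k := by
  rw [S.sup_eq k] at hx
  obtain ⟨p, hp, f, hf, rfl⟩ := mem_sup.1 hx
  rw [map_add]
  refine add_mem (mem_sup_left ⟨ι R ⟨p, S.P_le_gradedPart k hp⟩, ?_, S.canMap_ι _⟩)
    (mem_sup_right (S.ι_mem_UEAle hf))
  exact subset_span ⟨[(k, ⟨p, S.P_le_gradedPart k hp⟩)], by simpa using hp, by simp, by simp⟩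

end LieSplitFiltration

open LieSplitFiltration HahnSeries

/-- for a split-filtered Lie algebra `L` over a commutative ring `R`, the
universal enveloping algebra `U(L)`, with the filtration `U(L)_{≤n}`, is a split-filtered
algebra with respect to the graded algebra `U(L')`: the canonical map `U(L') → U(L)` is
injective on each homogeneous component `U(L')ₙ`, and `U(L)_{≤n}` is the internal direct
sum of the image of `U(L')ₙ` and `U(L)_{≤n-1}`. -/
theorem universal_enveloping_split_filtered (S : LieSplitFiltration R L) :
    ∀ n : ℤ,
      (∀ x ∈ UEAgrade S n, canMap S x = 0 → x = 0) ∧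
      UEAle S n = (UEAgrade S n).map (canMap S).toLinearMap ⊔ UEAle S (n - 1) ∧
      (UEAgrade S n).map (canMap S).toLinearMap ⊓ UEAle S (n - 1) = ⊥ := by
  intro n
  have hcoeff {u : UniversalEnvelopingAlgebra R (gradedPart S)} (hu : u ∈ UEAgrade S n) :
      (S.phi (canMap S u)).coeff (toDual n) = u := by
    rw [S.phi_canMap hu, coeff_single_same]
  refine ⟨fun u hu h0 => ?_, ?_, ?_⟩
  · rw [← hcoeff hu, h0, map_zero, coeff_zero]
  · exact le_antisymm
      (S.UEAle_le S.gradeImageSupUEAle_monotone (fun _ _ => S.ι_mem_gradeImageSupUEAle) n)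
      (sup_le (S.map_UEAgrade_le_UEAle n) (S.UEAle_mono (by omega)))
  · refine eq_bot_iff.2 ?_
    rintro _ ⟨⟨u, hu, rfl⟩, hle⟩
    have h : (S.phi (canMap S u)).coeff (toDual n) = 0 :=
      (mem_degreeLE (R := R)).1 (S.UEAle_le_comap_phi (n - 1) hle) n (by omega)
    rw [hcoeff hu] at h
    simp [h]
end

section
/- Let U be a split-filtered associative unital ring with exhaustive filtration, with graded splitting subring U'. Then the canonical seminorm cN^nU := U·U_{≤−n} is split-filtered and tight: for all n, p one has cN^nU ∩ U_{≤p} = (cN^nU ∩ U'_p) + (cN^nU ∩ U_{≤p−1}), and for all m, p there exists d with U_{≤−d} ⊆ cN^mU ∩ U_{≤p}. -/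
/-- The canonical neighborhoods `cN^n U = U · U_{≤ -n}`: the additive subgroup
generated by all products `u * v` with `v ∈ U_{≤ -n}`. -/
def canonicalNbhd {R : Type} [Ring R] (S : SplitFilteredRing R) (n : ℤ) : AddSubgroup R :=
  AddSubgroup.closure {x | ∃ u : R, ∃ v ∈ S.F (-n), x = u * v}

/-!
Expand a generator `u * v` of `cN^n U` (with `v ∈ U_{≤-n}`) into homogeneous components
`uⱼ ∈ U'_j`, `vₖ ∈ U'_k` (`k ≤ -n`) down to remainders so low that their products with the other
factor fall into `U_{≤-n}`. Each `uⱼ vₖ` is homogeneous of degree `j + k` and lies in `cN^n U`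
because `vₖ ∈ U_{≤-n}`. Hence every element of `cN^n U` is a finite sum of homogeneous elements
of `cN^n U` plus an element of `U_{≤-n}`. If such a sum lies in `U_{≤p}` with `p > -n`, its
components of degree `> p` vanish one at a time from the top, since `U'_{q+1} ∩ U_{≤q} = 0`;
what is left is its degree-`p` component plus an element of `cN^n U ∩ U_{≤p-1}`.
For `p ≤ -n` the claim is the splitting of `U_{≤p} ⊆ cN^n U` itself.
-/

namespace SplitFilteredRing

variable {R : Type} [Ring R] (S : SplitFilteredRing R)

theorem F_mono : Monotone S.F :=
  monotone_int_of_le_succ S.mono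

theorem eq_zero_of_mem_P_of_mem_F {n : ℤ} {x : R} (hP : x ∈ S.P n) (hF : x ∈ S.F (n - 1)) :
    x = 0 := by
  simpa [S.inf_eq n] using AddSubgroup.mem_inf.mpr ⟨hP, hF⟩

theorem F_le_iSup_P_sup_F (c a : ℤ) : S.F a ≤ (⨆ j ∈ Set.Iic a, S.P j) ⊔ S.F c := by
  obtain hac | hca := le_total a c
  · exact (S.F_mono hac).trans le_sup_right
  induction a, hca using Int.leInduction with
  | base => exact le_sup_right
  | succ a hca ih =>
    rw [S.sup_eq (a + 1), add_sub_cancel_right]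
    refine sup_le (le_sup_of_le_left (le_biSup S.P (Set.mem_Iic.mpr le_rfl))) (ih.trans ?_)
    exact sup_le_sup_right (biSup_mono fun j hj => (Set.mem_Iic.mp hj).trans (by omega)) _

theorem inf_F_le_of_F_le {M : AddSubgroup R} {p : ℤ} (h : S.F p ≤ M) :
    M ⊓ S.F p ≤ (M ⊓ S.P p) ⊔ (M ⊓ S.F (p - 1)) := by
  rw [inf_eq_right.mpr h, inf_eq_right.mpr ((S.P_le_F p).trans h),
    inf_eq_right.mpr ((S.F_mono (by omega)).trans h), ← S.sup_eq]

theorem sup_le_inf_F {M : AddSubgroup R} (p : ℤ) : (M ⊓ S.P p) ⊔ (M ⊓ S.F (p - 1)) ≤ M ⊓ S.F p :=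
  sup_le (inf_le_inf_left M (S.P_le_F p)) (inf_le_inf_left M (S.F_mono (by omega)))

variable (M : AddSubgroup R) (c : ℤ)

def homogeneousSpan (q : ℤ) : AddSubgroup R :=
  (⨆ d ∈ Set.Iic q, M ⊓ S.P d) ⊔ (M ⊓ S.F c)

theorem homogeneousSpan_mono : Monotone (S.homogeneousSpan M c) := fun _ _ hqr =>
  sup_le_sup_right (biSup_mono fun _ hd => (Set.mem_Iic.mp hd).trans hqr) _

theorem homogeneousSpan_le_F {q : ℤ} (hcq : c ≤ q) : S.homogeneousSpan M c q ≤ S.F q :=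
  sup_le (iSup₂_le fun d hd => inf_le_right.trans ((S.P_le_F d).trans (S.F_mono hd)))
    (inf_le_right.trans (S.F_mono hcq))

theorem homogeneousSpan_le_sup {p : ℤ} (hcp : c < p) :
    S.homogeneousSpan M c p ≤ (M ⊓ S.P p) ⊔ (M ⊓ S.F (p - 1)) := by
  refine sup_le (iSup₂_le fun d hd => ?_)
    (le_sup_of_le_right (inf_le_inf_left M (S.F_mono (by omega))))
  rcases (Set.mem_Iic.mp hd).eq_or_lt with rfl | hdp
  · exact le_sup_left
  · exact le_sup_of_le_right (inf_le_inf_left M ((S.P_le_F d).trans (S.F_mono (by omega))))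

theorem homogeneousSpan_succ_le (q : ℤ) :
    S.homogeneousSpan M c (q + 1) ≤ (M ⊓ S.P (q + 1)) ⊔ S.homogeneousSpan M c q := by
  refine sup_le (iSup₂_le fun d hd => ?_) (le_sup_of_le_right le_sup_right)
  rcases (Set.mem_Iic.mp hd).eq_or_lt with rfl | hdq
  · exact le_sup_left
  · exact le_sup_of_le_right (le_sup_of_le_left (le_biSup (fun d => M ⊓ S.P d)
      (Set.mem_Iic.mpr (by omega))))

theorem homogeneousSpan_succ_inf_F_le {p q : ℤ} (hcp : c ≤ p) (hpq : p ≤ q) :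
    S.homogeneousSpan M c (q + 1) ⊓ S.F p ≤ S.homogeneousSpan M c q := by
  rintro x ⟨hx, hxp⟩
  obtain ⟨y, hy, t, ht, rfl⟩ := AddSubgroup.mem_sup.mp (S.homogeneousSpan_succ_le M c q hx)
  have hyF : y ∈ S.F (q + 1 - 1) := by
    rw [add_sub_cancel_right, ← add_sub_cancel_right y t]
    exact sub_mem (S.F_mono hpq hxp) (S.homogeneousSpan_le_F M c (hcp.trans hpq) ht)
  rwa [S.eq_zero_of_mem_P_of_mem_F hy.2 hyF, zero_add]

theorem homogeneousSpan_inf_F_le {p q : ℤ} (hcp : c < p) (hpq : p ≤ q) :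
    S.homogeneousSpan M c q ⊓ S.F p ≤ (M ⊓ S.P p) ⊔ (M ⊓ S.F (p - 1)) := by
  induction q, hpq using Int.leInduction with
  | base => exact inf_le_left.trans (S.homogeneousSpan_le_sup M c hcp)
  | succ q hpq ih =>
    exact (le_inf (S.homogeneousSpan_succ_inf_F_le M c hcp.le hpq) inf_le_right).trans ih

theorem inf_F_le_of_forall_mem_homogeneousSpan
    (hM : ∀ x ∈ M, ∃ q, x ∈ S.homogeneousSpan M c q) {p : ℤ} (hcp : c < p) :
    M ⊓ S.F p ≤ (M ⊓ S.P p) ⊔ (M ⊓ S.F (p - 1)) := by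
  rintro x ⟨hxM, hxp⟩
  obtain ⟨q, hq⟩ := hM x hxM
  exact S.homogeneousSpan_inf_F_le M c hcp (le_max_right q p)
    ⟨S.homogeneousSpan_mono M c (le_max_left q p) hq, hxp⟩

theorem F_le_canonicalNbhd (n : ℤ) : S.F (-n) ≤ canonicalNbhd S n :=
  fun v hv => AddSubgroup.subset_closure ⟨1, v, hv, (one_mul v).symm⟩

theorem mul_mem_homogeneousSpan_of_mem_P {n j : ℤ} {x v : R} (hx : x ∈ S.P j)
    (hv : v ∈ S.F (-n)) :
    x * v ∈ S.homogeneousSpan (canonicalNbhd S n) (-n) (j - n) := by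
  suffices S.F (-n) ≤ (S.homogeneousSpan (canonicalNbhd S n) (-n) (j - n)).comap
      (AddMonoidHom.mulLeft x) from this hv
  refine (S.F_le_iSup_P_sup_F (-n - j) (-n)).trans (sup_le (iSup₂_le fun k hk w hw => ?_) ?_)
  · have hwF : w ∈ S.F (-n) := S.F_mono hk (S.P_le_F k hw)
    refine le_sup_of_le_left (le_biSup (fun d => canonicalNbhd S n ⊓ S.P d)
      (Set.mem_Iic.mpr (by linarith [Set.mem_Iic.mp hk]))) ⟨?_, S.P_mul_mem j k x w hx hw⟩
    exact AddSubgroup.subset_closure ⟨x, w, hwF, rfl⟩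
  · intro r hr
    have hxr : x * r ∈ S.F (-n) := by
      simpa using S.mul_mem j (-n - j) x r (S.P_le_F j hx) hr
    exact AddSubgroup.mem_sup_right ⟨S.F_le_canonicalNbhd n hxr, hxr⟩

theorem mul_mem_homogeneousSpan {n a : ℤ} {u v : R} (hu : u ∈ S.F a) (hv : v ∈ S.F (-n)) :
    u * v ∈ S.homogeneousSpan (canonicalNbhd S n) (-n) (a - n) := by
  suffices S.F a ≤ (S.homogeneousSpan (canonicalNbhd S n) (-n) (a - n)).comap
      (AddMonoidHom.mulRight v) from this hu
  refine (S.F_le_iSup_P_sup_F 0 a).trans (sup_le (iSup₂_le fun j hj x hx => ?_) fun r hr => ?_)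
  · exact S.homogeneousSpan_mono _ _ (by linarith [Set.mem_Iic.mp hj])
      (S.mul_mem_homogeneousSpan_of_mem_P hx hv)
  · have hrv : r * v ∈ S.F (-n) := by simpa using S.mul_mem 0 (-n) r v hr hv
    exact AddSubgroup.mem_sup_right ⟨S.F_le_canonicalNbhd n hrv, hrv⟩

theorem exists_mem_homogeneousSpan_canonicalNbhd (hexh : ∀ x : R, ∃ n : ℤ, x ∈ S.F n) (n : ℤ) :
    ∀ x ∈ canonicalNbhd S n, ∃ q, x ∈ S.homogeneousSpan (canonicalNbhd S n) (-n) q := by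
  intro x hx
  induction hx using AddSubgroup.closure_induction with
  | mem _ h =>
    obtain ⟨u, v, hv, rfl⟩ := h
    obtain ⟨a, hu⟩ := hexh u
    exact ⟨a - n, S.mul_mem_homogeneousSpan hu hv⟩
  | zero => exact ⟨0, zero_mem _⟩
  | add x y _ _ hx hy =>
    obtain ⟨q, hq⟩ := hx
    obtain ⟨r, hr⟩ := hy
    exact ⟨max q r, add_mem (S.homogeneousSpan_mono _ _ (le_max_left q r) hq)
      (S.homogeneousSpan_mono _ _ (le_max_right q r) hr)⟩
  | neg x _ hx =>
    obtain ⟨q, hq⟩ := hx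
    exact ⟨q, neg_mem hq⟩

end SplitFilteredRing

/-- on a split-filtered associative unital ring with exhaustive
filtration, the canonical seminorm `cN^n U = U·U_{≤-n}` is split-filtered and tight. -/
theorem canonical_seminorm_split_filtered_and_tight {R : Type} [Ring R]
    (S : SplitFilteredRing R) (hexh : ∀ x : R, ∃ n : ℤ, x ∈ S.F n) :
    (∀ n p : ℤ, canonicalNbhd S n ⊓ S.F p =
      (canonicalNbhd S n ⊓ S.P p) ⊔ (canonicalNbhd S n ⊓ S.F (p - 1))) ∧
    (∀ m p : ℤ, ∃ d : ℤ, S.F (-d) ≤ canonicalNbhd S m ⊓ S.F p) := by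
  refine ⟨fun n p => le_antisymm ?_ (S.sup_le_inf_F p), fun m p => ⟨max m (-p), ?_⟩⟩
  · rcases le_or_gt p (-n) with hpn | hnp
    · exact S.inf_F_le_of_F_le ((S.F_mono hpn).trans (S.F_le_canonicalNbhd n))
    · exact S.inf_F_le_of_forall_mem_homogeneousSpan _ _
        (S.exists_mem_homogeneousSpan_canonicalNbhd hexh n) hnp
  · exact le_inf ((S.F_mono (by omega)).trans (S.F_le_canonicalNbhd m)) (S.F_mono (by omega))
end

section
/- Let U be a split-filtered associative ring equipped with a split-filtered seminorm N, and write cN^nU := U·U_{≤−n} and, for any subgroup M ⊆ U, M_{≤p} := M ∩ U_{≤p}. Then the following are equivalent: (1) N^nU_{≤p} = cN^nU_{≤p} + N^{n+1}U_{≤p} for all n, p; (2) N^nU_{≤p} = cN^nU_{≤p} + N^{n+d}U_{≤p} for all n, p and all d > 0; (3) for all n, p: cN^nU_{≤p} ⊆ N^nU_{≤p}, and cN^nU_{≤p} is dense in N^nU_{≤p}, i.e. for every x ∈ N^nU_{≤p} and every m ∈ ℤ there exists y ∈ cN^nU_{≤p} with x − y ∈ N^mU. -/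
/-!
All three conditions are statements about a single filtration level `U_{≤p}`. Since the
canonical neighborhoods decrease in `n`, the one-step decompositions
`N^n = cN^n + N^{n+1}` telescope to `N^n = cN^n + N^{n+d}`; and a decomposition
`N^n = cN^n + N^m` says exactly that every element of `N^n` is approximated by `cN^n`
up to an error in `N^m`, which is the density condition once `m` ranges over all integers.
-/

lemma SplitFilteredRing.monotone_F {R : Type} [Ring R] (S : SplitFilteredRing R) :
    Monotone S.F :=
  monotone_int_of_le_succ S.mono

lemma antitone_canonicalNbhd {R : Type} [Ring R] (S : SplitFilteredRing R) :
    Antitone (canonicalNbhd S) := by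
  intro m n hmn
  apply AddSubgroup.closure_mono
  rintro x ⟨u, v, hv, rfl⟩
  exact ⟨u, v, S.monotone_F (neg_le_neg hmn) hv, rfl⟩

lemma Antitone.eq_sup_add_of_eq_sup_add_one {α : Type*} [Lattice α] {A C : ℤ → α}
    (hC : Antitone C) (h : ∀ n, A n = C n ⊔ A (n + 1)) (n : ℤ) {d : ℤ} (hd : 0 ≤ d) :
    A n = C n ⊔ A (n + d) := by
  induction d, hd using Int.leInduction with
  | base =>
    have hCA : C n ≤ A n := h n ▸ le_sup_left
    simpa using (sup_eq_right.mpr hCA).symm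
  | succ d hd ih =>
    have hCd : C (n + d) ≤ C n := hC (by omega)
    rw [ih, h (n + d), ← sup_assoc, sup_eq_left.mpr hCd, add_assoc]

namespace AddSubgroup

variable {G : Type*} [AddCommGroup G]

lemma inf_eq_sup_inf_iff_forall_exists_sub_mem {K L M F : AddSubgroup G}
    (hKF : K ≤ F) (hML : M ≤ L) :
    L ⊓ F = K ⊔ (M ⊓ F) ↔ K ≤ L ⊓ F ∧ ∀ x ∈ L ⊓ F, ∃ y ∈ K, x - y ∈ M := by
  constructor
  · intro h
    refine ⟨h ▸ le_sup_left, fun x hx => ?_⟩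
    rw [h] at hx
    obtain ⟨y, hy, z, hz, rfl⟩ := mem_sup.mp hx
    exact ⟨y, hy, by simpa using hz.1⟩
  · rintro ⟨hKL, hdense⟩
    refine le_antisymm (fun x hx => ?_) (sup_le hKL (inf_le_inf_right F hML))
    obtain ⟨y, hy, hxy⟩ := hdense x hx
    have hxyF : x - y ∈ F := sub_mem (mem_inf.mp hx).2 (hKF hy)
    exact mem_sup.mpr ⟨y, hy, x - y, mem_inf.mpr ⟨hxy, hxyF⟩, add_sub_cancel y x⟩

lemma forall_inf_eq_sup_inf_iff_dense {N : ℤ → AddSubgroup G} (hN : Antitone N)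
    {K F : AddSubgroup G} (hKF : K ≤ F) (n : ℤ) :
    (∀ d : ℤ, 0 < d → N n ⊓ F = K ⊔ (N (n + d) ⊓ F)) ↔
      K ≤ N n ⊓ F ∧ ∀ x ∈ N n ⊓ F, ∀ m : ℤ, ∃ y ∈ K, x - y ∈ N m := by
  have hdecomp (d : ℤ) (hd : 0 < d) :=
    inf_eq_sup_inf_iff_forall_exists_sub_mem (L := N n) (M := N (n + d)) (F := F) hKF
      (hN (by omega))
  constructor
  · intro h
    refine ⟨((hdecomp 1 one_pos).mp (h 1 one_pos)).1, fun x hx m => ?_⟩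
    -- an approximation up to `N (n + d)` with `n + d ≥ m` is one up to `N m`
    obtain ⟨y, hy, hxy⟩ := ((hdecomp _ (lt_max_of_lt_right one_pos)).mp
      (h (max (m - n) 1) (lt_max_of_lt_right one_pos))).2 x hx
    exact ⟨y, hy, hN (by omega) hxy⟩
  · rintro ⟨hKL, hdense⟩ d hd
    exact (hdecomp d hd).mpr ⟨hKL, fun x hx => hdense x hx (n + d)⟩

end AddSubgroup

theorem almost_canonical_conditions_tfae_general {R : Type} [Ring R] (S : SplitFilteredRing R)
    (N : ℤ → AddSubgroup R)
    (hN_anti : ∀ n : ℤ, N n ≤ N (n - 1)) :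
    ((∀ n p : ℤ,
        N n ⊓ S.F p = (canonicalNbhd S n ⊓ S.F p) ⊔ (N (n + 1) ⊓ S.F p)) ↔
      (∀ n p d : ℤ, 0 < d →
        N n ⊓ S.F p = (canonicalNbhd S n ⊓ S.F p) ⊔ (N (n + d) ⊓ S.F p))) ∧
    ((∀ n p d : ℤ, 0 < d →
        N n ⊓ S.F p = (canonicalNbhd S n ⊓ S.F p) ⊔ (N (n + d) ⊓ S.F p)) ↔
      (∀ n p : ℤ,
        canonicalNbhd S n ⊓ S.F p ≤ N n ⊓ S.F p ∧
        ∀ x ∈ N n ⊓ S.F p, ∀ m : ℤ, ∃ y ∈ canonicalNbhd S n ⊓ S.F p, x - y ∈ N m)) := by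
  have hN : Antitone N := antitone_int_of_succ_le fun n => by simpa using hN_anti (n + 1)
  refine ⟨⟨fun h1 n p d hd => ?_, fun h2 n p => h2 n p 1 one_pos⟩,
    forall₂_congr fun n p => AddSubgroup.forall_inf_eq_sup_inf_iff_dense hN inf_le_right n⟩
  exact Antitone.eq_sup_add_of_eq_sup_add_one (A := fun n => N n ⊓ S.F p)
    (fun _ _ hmn => inf_le_inf_right _ (antitone_canonicalNbhd S hmn)) (fun n => h1 n p) n hd.le

/-- for a split-filtered ring with a split-filtered seminorm `N`, the
following are equivalent:
(1) `N^n U_{≤p} = cN^n U_{≤p} + N^{n+1} U_{≤p}` for all `n, p`;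
(2) `N^n U_{≤p} = cN^n U_{≤p} + N^{n+d} U_{≤p}` for all `n, p` and all `d > 0`;
(3) `cN^n U_{≤p}` is contained in and dense in `N^n U_{≤p}`. -/
theorem almost_canonical_conditions_tfae {R : Type} [Ring R] (S : SplitFilteredRing R)
    (N : ℤ → AddSubgroup R)
    (hN_anti : ∀ n : ℤ, N n ≤ N (n - 1))
    (hN_exh : ∀ x : R, ∃ n : ℤ, x ∈ N n)
    (hsplit : ∀ n p : ℤ, N n ⊓ S.F p = (N n ⊓ S.P p) ⊔ (N n ⊓ S.F (p - 1))) :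
    ((∀ n p : ℤ,
        N n ⊓ S.F p = (canonicalNbhd S n ⊓ S.F p) ⊔ (N (n + 1) ⊓ S.F p)) ↔
      (∀ n p d : ℤ, 0 < d →
        N n ⊓ S.F p = (canonicalNbhd S n ⊓ S.F p) ⊔ (N (n + d) ⊓ S.F p))) ∧
    ((∀ n p d : ℤ, 0 < d →
        N n ⊓ S.F p = (canonicalNbhd S n ⊓ S.F p) ⊔ (N (n + d) ⊓ S.F p)) ↔
      (∀ n p : ℤ,
        canonicalNbhd S n ⊓ S.F p ≤ N n ⊓ S.F p ∧
        ∀ x ∈ N n ⊓ S.F p, ∀ m : ℤ, ∃ y ∈ canonicalNbhd S n ⊓ S.F p, x - y ∈ N m)) :=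
  almost_canonical_conditions_tfae_general S N hN_anti
end
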